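/- arXiv:0904.1651 — 5 statements merged into one kernel-verified Lean document; each statement's English description precedes it below -/
import Mathlib

section
/- Let G_ω be a weighted graph and let S be a multiset of pebbling moves on G_ω. Then there exists a sub-multiset R ⊆ S that is acyclic and satisfies p_R(v) ≥ p_S(v) for every pebble function p on G and every vertex v ∈ V(G). -/
/-!
A directed cycle `C` in the transition digraph has, at every vertex, in-degree equal to
out-degree. Since every weight is at least one, deleting `C` from `S` changes `p_S(v)` by the
out-weight of `C` at `v` minus its in-degree, which is nonnegative. Deleting cycles one at a
time strictly shrinks `S`, so the process ends at an acyclic sub-multiset.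
-/

open Finset

variable {V : Type*}

/-- Applying the pebbling move `m = (v, u)` on `G_ω`: remove `ω v u` pebbles at `v`
and add one pebble at `u`. -/
def moveFn [DecidableEq V] (ω : V → V → ℕ) (m : V × V) (p : V → ℤ) : V → ℤ :=
  fun w => if w = m.1 then p m.1 - ω m.1 m.2 else if w = m.2 then p m.2 + 1 else p w

/-- The pebble function obtained after applying a sequence of pebbling moves. -/
def applyList [DecidableEq V] (ω : V → V → ℕ) : List (V × V) → (V → ℤ) → (V → ℤ)
  | [], p => p
  | m :: l, p => applyList ω l (moveFn ω m p)

/-- A pebbling sequence is executable from `p` if every move is along an edge of `G`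
and every intermediate pebble function is nonnegative. -/
def Executable [DecidableEq V] (G : SimpleGraph V) (ω : V → V → ℕ) :
    (V → ℤ) → List (V × V) → Prop
  | _, [] => True
  | p, m :: l => G.Adj m.1 m.2 ∧ (∀ w, 0 ≤ moveFn ω m p w) ∧ Executable G ω (moveFn ω m p) l

/-- `x` is `t`-reachable from `p` on the weighted graph `G_ω`. -/
def Reaches [DecidableEq V] (G : SimpleGraph V) (ω : V → V → ℕ) (p : V → ℤ) (x : V)
    (t : ℕ) : Prop :=
  ∃ l : List (V × V), Executable G ω p l ∧ (t : ℤ) ≤ applyList ω l p x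

/-- A pebble distribution is a nonnegative pebble function. -/
def IsDistrib (p : V → ℤ) : Prop := ∀ v, 0 ≤ p v

/-- The size of a pebble distribution: the total number of pebbles. -/
def size [Fintype V] (p : V → ℤ) : ℤ := ∑ v, p v

/-- The `t`-pebbling number `π_t(G_ω, x)`: the least `m` such that `x` is `t`-reachable
from every pebble distribution of size `m`. -/
noncomputable def piT [Fintype V] [DecidableEq V] (G : SimpleGraph V) (ω : V → V → ℕ)
    (x : V) (t : ℕ) : ℕ :=
  sInf {m : ℕ | ∀ p : V → ℤ, IsDistrib p → size p = (m : ℤ) → Reaches G ω p x t}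

/-- `p_S` for a multiset `S` of pebbling moves:
`p_S(w) = p(w) + d⁻(w) − ∑ ω(w,u)` over arcs leaving `w`. -/
def applyMS [DecidableEq V] (ω : V → V → ℕ) (S : Multiset (V × V)) (p : V → ℤ) : V → ℤ :=
  fun w => p w + (Multiset.card (S.filter (fun m => m.2 = w)) : ℤ)
    - ((S.filter (fun m => m.1 = w)).map (fun m => (ω m.1 m.2 : ℤ))).sum

/-- The transition digraph of `S` contains a directed cycle. -/
def HasCycle (S : Multiset (V × V)) : Prop :=
  ∃ l : List (V × V), l ≠ [] ∧ (l : Multiset (V × V)) ≤ S ∧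
    List.Chain' (fun a b => a.2 = b.1) l ∧
    l.getLast?.map Prod.snd = l.head?.map Prod.fst

/-- A multiset of pebbling moves is acyclic if its transition digraph has no directed cycle. -/
def Acyclic (S : Multiset (V × V)) : Prop := ¬HasCycle S

/-- A list of pebbling moves is regular if each move is an initial move of the multiset of
remaining moves: the source of each move has in-degree zero among the remaining moves. -/
def RegularSeq : List (V × V) → Prop
  | [] => True
  | m :: l => (∀ m' ∈ m :: l, m'.2 ≠ m.1) ∧ RegularSeq l

namespace List

theorem head_fst_cons_map_snd_eq_map_fst_add_getLast_snd {l : List (V × V)} (hne : l ≠ [])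
    (hl : l.IsChain fun a b => a.2 = b.1) :
    (l.head hne).1 ::ₘ ((l.map Prod.snd : List V) : Multiset V)
      = ((l.map Prod.fst : List V) : Multiset V) + {(l.getLast hne).2} := by
  induction l with
  | nil => contradiction
  | cons m l ih =>
    rcases l with _ | ⟨m', l⟩
    · simp [Multiset.singleton_add]
    · obtain ⟨hmm', hl⟩ := List.isChain_cons_cons.mp hl
      have := ih (cons_ne_nil _ _) hl
      simp only [head_cons, map_cons, ← Multiset.cons_coe, getLast_cons_cons] at this ⊢
      rw [hmm', this]
      simp only [Multiset.cons_add]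

theorem map_fst_eq_map_snd_of_isChain_of_closed {l : List (V × V)}
    (hl : l.IsChain fun a b => a.2 = b.1)
    (hclosed : l.getLast?.map Prod.snd = l.head?.map Prod.fst) :
    ((l : Multiset (V × V)).map Prod.fst) = (l : Multiset (V × V)).map Prod.snd := by
  rcases eq_or_ne l [] with rfl | hne
  · rfl
  have hends : (l.getLast hne).2 = (l.head hne).1 := by
    simpa [getLast?_eq_some_getLast hne, head?_eq_some_head hne] using hclosed
  have := head_fst_cons_map_snd_eq_map_fst_add_getLast_snd hne hl
  rw [hends, add_comm, Multiset.singleton_add, Multiset.cons_inj_right] at this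
  simpa using this.symm

end List

section MoveMultiset

variable [DecidableEq V] (ω : V → V → ℕ)

theorem applyMS_add (S T : Multiset (V × V)) (p : V → ℤ) (v : V) :
    applyMS ω (S + T) p v = applyMS ω S p v + (Multiset.card (T.filter (·.2 = v)) : ℤ)
      - ((T.filter (·.1 = v)).map (fun m => (ω m.1 m.2 : ℤ))).sum := by
  simp only [applyMS, Multiset.filter_add, Multiset.map_add, Multiset.sum_add,
    Multiset.card_add]
  push_cast
  ring

theorem applyMS_le_applyMS_sub_of_map_fst_eq_map_snd {S C : Multiset (V × V)} (hCS : C ≤ S)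
    (hω : ∀ m ∈ C, 1 ≤ ω m.1 m.2) (hC : C.map Prod.fst = C.map Prod.snd)
    (p : V → ℤ) (v : V) : applyMS ω S p v ≤ applyMS ω (S - C) p v := by
  have hdeg : Multiset.card (C.filter (·.2 = v)) = Multiset.card (C.filter (·.1 = v)) := by
    simpa only [Multiset.count_map, eq_comm (a := v)] using congrArg (Multiset.count v) hC.symm
  have hweight : (Multiset.card (C.filter (·.1 = v)) : ℤ)
      ≤ ((C.filter (·.1 = v)).map fun m => (ω m.1 m.2 : ℤ)).sum :=
    calc (Multiset.card (C.filter (·.1 = v)) : ℤ)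
        = Multiset.card ((C.filter (·.1 = v)).map fun m => (ω m.1 m.2 : ℤ)) • (1 : ℤ) := by simp
      _ ≤ _ := Multiset.card_nsmul_le_sum fun x hx => by
        obtain ⟨m, hm, rfl⟩ := Multiset.mem_map.mp hx
        exact_mod_cast hω m (Multiset.mem_of_mem_filter hm)
  rw [← tsub_add_cancel_of_le hCS, applyMS_add, add_tsub_cancel_right, hdeg]
  linarith

theorem exists_acyclic_le_applyMS_le (S : Multiset (V × V)) (hω : ∀ m ∈ S, 1 ≤ ω m.1 m.2) :
    ∃ R ≤ S, Acyclic R ∧ ∀ p v, applyMS ω S p v ≤ applyMS ω R p v := by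
  induction S using Multiset.strongInductionOn with
  | ih S ih =>
    by_cases hS : Acyclic S
    · exact ⟨S, le_rfl, hS, fun _ _ => le_rfl⟩
    obtain ⟨l, hne, hlS, hl, hclosed⟩ := not_not.mp hS
    have hl0 : 0 < (l : Multiset (V × V)) :=
      pos_iff_ne_zero.2 (mt (Multiset.coe_eq_zero l).1 hne)
    have hlt : S - l < S := by
      simpa [tsub_add_cancel_of_le hlS] using lt_add_of_pos_right (S - l) hl0
    obtain ⟨R, hR, hRacyc, hRS⟩ :=
      ih (S - l) hlt fun m hm => hω m (Multiset.mem_of_le tsub_le_self hm)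
    refine ⟨R, hR.trans tsub_le_self, hRacyc, fun p v => ?_⟩
    calc applyMS ω S p v ≤ applyMS ω (S - l) p v :=
          applyMS_le_applyMS_sub_of_map_fst_eq_map_snd ω hlS
            (fun m hm => hω m (Multiset.mem_of_le hlS hm))
            (List.map_fst_eq_map_snd_of_isChain_of_closed hl hclosed) p v
      _ ≤ applyMS ω R p v := hRS p v

end MoveMultiset

theorem statement0_general {V : Type*} [DecidableEq V]
    (G : SimpleGraph V)
    (ω : V → V → ℕ)
    (hω : ∀ u v : V, G.Adj u v → 2 ≤ ω u v)
    (S : Multiset (V × V)) (hS : ∀ m ∈ S, G.Adj m.1 m.2) :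
    ∃ R : Multiset (V × V), R ≤ S ∧ Acyclic R ∧
      ∀ (p : V → ℤ) (v : V), applyMS ω S p v ≤ applyMS ω R p v :=
  exists_acyclic_le_applyMS_le ω S fun m hm => one_le_two.trans (hω _ _ (hS m hm))

/-- For any multiset `S` of pebbling moves on a weighted graph `G_ω`
there is an acyclic sub-multiset `R ⊆ S` with `p_R(v) ≥ p_S(v)` for every pebble
function `p` and every vertex `v`. -/
theorem statement0 {V : Type*} [Fintype V] [DecidableEq V]
    (G : SimpleGraph V) (hG : G.Connected)
    (ω : V → V → ℕ) (hsym : ∀ u v : V, ω u v = ω v u)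
    (hω : ∀ u v : V, G.Adj u v → 2 ≤ ω u v)
    (S : Multiset (V × V)) (hS : ∀ m ∈ S, G.Adj m.1 m.2) :
    ∃ R : Multiset (V × V), R ≤ S ∧ Acyclic R ∧
      ∀ (p : V → ℤ) (v : V), applyMS ω S p v ≤ applyMS ω R p v :=
  statement0_general G ω hω S hS
end

section
/- Let S be an acyclic multiset of pebbling moves on a weighted graph G_ω. Then the elements of S can be listed as a regular sequence s = (s_1,…,s_n). Moreover, if S is balanced with a pebble distribution p, then this regular sequence s is executable from p. -/
open Finset

variable {V : Type*}

/-!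
An acyclic `S` has an initial move `m = (v, u)`: otherwise, following incoming arcs backwards
inside `S` would give walks longer than `|S|` without closing a cycle. Since no arc of `S` enters
`v`, `p_S(v) ≥ 0` says that `p(v)` pays for every arc leaving `v`, in particular for `m`;
and after the move, `S ∖ {m}` has the same balance with the new distribution as `S` had with `p`.
Induction on `|S|` then lists `S` regularly and executes the list.
-/

namespace HasCycle

variable {S T : Multiset (V × V)}

theorem mono (hST : S ≤ T) : HasCycle S → HasCycle T
  | ⟨l, hne, hle, hch, hends⟩ => ⟨l, hne, hle.trans hST, hch, hends⟩

theorem of_chain_of_mem {h m : V × V} {t : List (V × V)}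
    (hle : ((h :: t : List (V × V)) : Multiset (V × V)) ≤ S)
    (hch : List.IsChain (fun a b => a.2 = b.1) (h :: t))
    (hm : m ∈ h :: t) (hmh : m.2 = h.1) : HasCycle S := by
  obtain ⟨l₁, l₂, hl⟩ := List.append_of_mem hm
  have hpre : l₁ ++ [m] <+: h :: t := ⟨l₂, by simp [hl]⟩
  refine ⟨l₁ ++ [m], by simp, (Multiset.coe_le.mpr hpre.sublist.subperm).trans hle,
    List.IsChain.prefix hch hpre, ?_⟩
  rw [List.getLast?_concat]
  cases l₁ <;> simp_all

end HasCycle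

theorem Acyclic.mono {S T : Multiset (V × V)} (hST : S ≤ T) (hT : Acyclic T) : Acyclic S :=
  fun hS => hT (hS.mono hST)

theorem Acyclic.exists_initial {S : Multiset (V × V)} (hS : Acyclic S) (hne : S ≠ 0) :
    ∃ m ∈ S, ∀ m' ∈ S, m'.2 ≠ m.1 := by
  by_contra! hpred
  have hwalk : ∀ n : ℕ, ∃ h t, ((h :: t : List (V × V)) : Multiset (V × V)) ≤ S ∧
      List.IsChain (fun a b => a.2 = b.1) (h :: t) ∧ t.length = n := by
    intro n
    induction n with
    | zero =>
      obtain ⟨m, hm⟩ := Multiset.exists_mem_of_ne_zero hne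
      exact ⟨m, [], by simpa using hm, List.isChain_singleton m, rfl⟩
    | succ n ih =>
      obtain ⟨h, t, hle, hch, rfl⟩ := ih
      obtain ⟨m, hmS, hmh⟩ := hpred h (Multiset.mem_of_le hle (by simp))
      have hnew : m ∉ h :: t := fun hm => hS (.of_chain_of_mem hle hch hm hmh)
      refine ⟨m, h :: t, ?_, List.isChain_cons_cons.mpr ⟨hmh, hch⟩, rfl⟩
      rw [← Multiset.cons_coe]
      exact (Multiset.cons_le_of_notMem (by simpa using hnew)).mpr ⟨hmS, hle⟩
  obtain ⟨h, t, hle, -, ht⟩ := hwalk (Multiset.card S)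
  have := Multiset.card_le_card hle
  simp [ht] at this

theorem Acyclic.exists_regularSeq [DecidableEq V] {S : Multiset (V × V)} (hS : Acyclic S) :
    ∃ s : List (V × V), (s : Multiset (V × V)) = S ∧ RegularSeq s := by
  induction S using Multiset.strongInductionOn with
  | ih S IH =>
    rcases eq_or_ne S 0 with rfl | hne
    · exact ⟨[], rfl, trivial⟩
    obtain ⟨m, hmS, hinit⟩ := hS.exists_initial hne
    obtain ⟨s, hs, hreg⟩ := IH (S.erase m) (Multiset.erase_lt.mpr hmS)
      (hS.mono (Multiset.erase_le m S))
    have hms : ((m :: s : List (V × V)) : Multiset (V × V)) = S := by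
      rw [← Multiset.cons_coe, hs, Multiset.cons_erase hmS]
    exact ⟨m :: s, hms, fun m' hm' => hinit m' (hms ▸ Multiset.mem_coe.mpr hm'), hreg⟩

section Balance

variable [DecidableEq V] {ω : V → V → ℕ} {p : V → ℤ} {m : V × V}

theorem weight_le_of_applyMS_nonneg {S : Multiset (V × V)} (hm : m ∈ S)
    (hinit : ∀ m' ∈ S, m'.2 ≠ m.1) (hbal : 0 ≤ applyMS ω S p m.1) :
    (ω m.1 m.2 : ℤ) ≤ p m.1 := by
  have hin : S.filter (fun m' => m'.2 = m.1) = 0 := Multiset.filter_eq_nil.mpr hinit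
  have hout : (ω m.1 m.2 : ℤ) ≤
      ((S.filter (fun m' => m'.1 = m.1)).map (fun m' => (ω m'.1 m'.2 : ℤ))).sum :=
    Multiset.single_le_sum (by simp) _
      (Multiset.mem_map_of_mem _ (Multiset.mem_filter.mpr ⟨hm, rfl⟩))
  simp only [applyMS, hin, Multiset.card_zero, Nat.cast_zero, add_zero] at hbal
  linarith

theorem IsDistrib.moveFn (hp : IsDistrib p) (hm : (ω m.1 m.2 : ℤ) ≤ p m.1) :
    IsDistrib (moveFn ω m p) := by
  intro w
  unfold _root_.moveFn
  split_ifs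
  · linarith
  · linarith [hp m.2]
  · exact hp w

theorem applyMS_cons (S : Multiset (V × V)) (hm : m.1 ≠ m.2) :
    applyMS ω (m ::ₘ S) p = applyMS ω S (moveFn ω m p) := by
  funext w
  by_cases h1 : w = m.1
  · subst h1
    simp [applyMS, moveFn, Ne.symm hm]
    ring
  · by_cases h2 : w = m.2
    · subst h2
      simp [applyMS, moveFn, h1, hm]
      ring
    · simp [applyMS, moveFn, h1, h2, Ne.symm h1, Ne.symm h2]

theorem RegularSeq.executable {G : SimpleGraph V} {s : List (V × V)} (hreg : RegularSeq s)
    (hadj : ∀ m ∈ s, G.Adj m.1 m.2) (hp : IsDistrib p)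
    (hbal : IsDistrib (applyMS ω s p)) : Executable G ω p s := by
  induction s generalizing p with
  | nil => trivial
  | cons m s ih =>
    obtain ⟨hinit, hreg⟩ := hreg
    have hm : G.Adj m.1 m.2 := hadj m (by simp)
    have hmove : IsDistrib (moveFn ω m p) :=
      hp.moveFn (weight_le_of_applyMS_nonneg (by simp) hinit (hbal m.1))
    refine ⟨hm, hmove, ih hreg (fun m' hm' => hadj m' (by simp [hm'])) hmove ?_⟩
    rwa [← applyMS_cons _ (G.ne_of_adj hm), Multiset.cons_coe]

end Balance

theorem statement1_general {V : Type*} [DecidableEq V]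
    (G : SimpleGraph V) (ω : V → V → ℕ)
    (S : Multiset (V × V)) (hS : ∀ m ∈ S, G.Adj m.1 m.2) (hacyc : Acyclic S) :
    ∃ s : List (V × V), (↑s : Multiset (V × V)) = S ∧ RegularSeq s ∧
      ∀ p : V → ℤ, IsDistrib p → (∀ v, 0 ≤ applyMS ω S p v) → Executable G ω p s := by
  obtain ⟨s, rfl, hreg⟩ := hacyc.exists_regularSeq
  exact ⟨s, rfl, hreg, fun p hp hbal => hreg.executable hS hp hbal⟩

/-- An acyclic multiset `S` of pebbling moves can be listed as a regular
sequence; moreover if `S` is balanced with a pebble distribution `p`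
(i.e. `p_S ≥ 0`), then this regular sequence is executable from `p`. -/
theorem statement1 {V : Type*} [Fintype V] [DecidableEq V]
    (G : SimpleGraph V) (hG : G.Connected)
    (ω : V → V → ℕ) (hsym : ∀ u v : V, ω u v = ω v u)
    (hω : ∀ u v : V, G.Adj u v → 2 ≤ ω u v)
    (S : Multiset (V × V)) (hS : ∀ m ∈ S, G.Adj m.1 m.2) (hacyc : Acyclic S) :
    ∃ s : List (V × V), (↑s : Multiset (V × V)) = S ∧ RegularSeq s ∧
      ∀ p : V → ℤ, IsDistrib p → (∀ v, 0 ≤ applyMS ω S p v) → Executable G ω p s :=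
  statement1_general G ω S hS hacyc
end

section
/- Let W_5 be the wheel graph on 5 vertices (a 4-cycle together with a hub vertex adjacent to all four cycle vertices), regarded as an unweighted graph, and let x be a vertex of degree 3 (a rim vertex). Then π_1(W_5, x) = 5 and π_t(W_5, x) = 4t for every t ≥ 2. -/
open Finset

variable {V : Type*}

/-- The wheel graph on 5 vertices: hub `0`, rim cycle `1-2-3-4-1`. -/
def W5 : SimpleGraph (Fin 5) :=
  SimpleGraph.fromRel (fun a b => a = 0 ∨ b.val = a.val + 1 ∨ (a = 4 ∧ b = 1))

instance : DecidableRel W5.Adj := fun a b =>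
  decidable_of_iff _ (SimpleGraph.fromRel_adj _ a b).symm

/-!
Upper bound: `x` and `y` are non-adjacent with three common neighbours, and these make up the whole
graph. The pebbles on `y` are spent in pairs, first to make the piles on the common neighbours
even and then all on one of them, after which every common neighbour sends all its pairs to `x`;
a parity count shows that this puts `t` pebbles on `x`.

Lower bounds: one pebble on each of `m < 5` vertices other than `x` allows no move at all. With
`m < 4t` pebbles all on `y`, weight `x` by `4`, `y` by `1` and the other vertices by `2`: no
pebbling move increases the weighted total `m`, so `x` never holds more than `m / 4` pebbles.
-/

section Moves

variable [DecidableEq V] {G : SimpleGraph V} {ω : V → V → ℕ}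

lemma moveFn_apply_of_ne {v u : V} (hvu : v ≠ u) (p : V → ℤ) (w : V) :
    moveFn ω (v, u) p w
      = p w - (if w = v then (ω v u : ℤ) else 0) + (if w = u then 1 else 0) := by
  unfold moveFn
  split_ifs <;> simp_all

lemma moveFn_iterate_apply {v u : V} (hvu : v ≠ u) (k : ℕ) (p : V → ℤ) (w : V) :
    (moveFn ω (v, u))^[k] p w
      = p w - (if w = v then k * (ω v u : ℤ) else 0) + (if w = u then (k : ℤ) else 0) := by
  induction k with
  | zero => simp
  | succ k ih =>
    rw [Function.iterate_succ_apply', moveFn_apply_of_ne hvu, ih]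
    split_ifs <;> push_cast <;> ring

lemma isDistrib_moveFn_iterate {v u : V} (hvu : v ≠ u) {k : ℕ} {p : V → ℤ} (hp : IsDistrib p)
    (hk : k * (ω v u : ℤ) ≤ p v) : IsDistrib ((moveFn ω (v, u))^[k] p) := by
  intro w
  rw [moveFn_iterate_apply hvu]
  have := hp w
  split_ifs <;> subst_vars <;> omega

lemma Reaches.of_moveFn_iterate {v u x : V} {k t : ℕ} {p : V → ℤ} (hvu : G.Adj v u)
    (hp : IsDistrib p) (hk : k * (ω v u : ℤ) ≤ p v)
    (h : Reaches G ω ((moveFn ω (v, u))^[k] p) x t) : Reaches G ω p x t := by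
  induction k generalizing p with
  | zero => exact h
  | succ k ih =>
    have hω : (ω v u : ℤ) ≤ p v := by
      have : 0 ≤ (k : ℤ) * ω v u := by positivity
      push_cast at hk
      linarith
    have hmove : IsDistrib (moveFn ω (v, u) p) :=
      isDistrib_moveFn_iterate (k := 1) hvu.ne hp (by simpa using hω)
    have hk' : k * (ω v u : ℤ) ≤ moveFn ω (v, u) p v := by
      rw [moveFn_apply_of_ne hvu.ne, if_pos rfl, if_neg hvu.ne]
      push_cast at hk
      linarith
    obtain ⟨l, hl, hx⟩ := ih hmove hk' h
    exact ⟨(v, u) :: l, ⟨hvu, hmove, hl⟩, hx⟩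

lemma isDistrib_applyList :
    ∀ (l : List (V × V)) {p : V → ℤ}, Executable G ω p l → IsDistrib p →
      IsDistrib (applyList ω l p)
  | [], _, _, hp => hp
  | _ :: l, _, ⟨_, hmove, hl⟩, _ => isDistrib_applyList l hl hmove

lemma not_reaches_of_lt_weight {p : V → ℤ} {x : V} {t : ℕ} (hp : ∀ v u, p v < ω v u)
    (hx : p x < t) : ¬Reaches G ω p x t := by
  rintro ⟨_ | ⟨m, l⟩, hl, ht⟩
  · exact absurd ht (not_le.mpr hx)
  · have := hl.2.1 m.1
    have := hp m.1 m.2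
    simp only [moveFn, if_true] at *
    omega

variable [Fintype V]

lemma sum_mul_moveFn {v u : V} (hvu : v ≠ u) (c p : V → ℤ) :
    ∑ w, c w * moveFn ω (v, u) p w = ∑ w, c w * p w - ω v u * c v + c u := by
  simp only [moveFn_apply_of_ne hvu, mul_add, mul_sub, mul_ite, mul_zero, mul_one,
    Finset.sum_add_distrib, Finset.sum_sub_distrib, Finset.sum_ite_eq', Finset.mem_univ, if_true]
  ring

lemma sum_mul_applyList_le (c : V → ℤ) (hc : ∀ v u, G.Adj v u → c u ≤ ω v u * c v) :
    ∀ (l : List (V × V)) {p : V → ℤ}, Executable G ω p l →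
      ∑ w, c w * applyList ω l p w ≤ ∑ w, c w * p w
  | [], _, _ => le_rfl
  | m :: l, p, ⟨hadj, _, hl⟩ => by
    refine (sum_mul_applyList_le c hc l hl).trans ?_
    rw [sum_mul_moveFn hadj.ne]
    linarith [hc m.1 m.2 hadj]

lemma mul_le_sum_mul_of_reaches {c p : V → ℤ} {x : V} {t : ℕ} (hc₀ : ∀ v, 0 ≤ c v)
    (hc : ∀ v u, G.Adj v u → c u ≤ ω v u * c v) (hp : IsDistrib p) (h : Reaches G ω p x t) :
    c x * t ≤ ∑ w, c w * p w := by
  obtain ⟨l, hl, ht⟩ := h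
  have hq := isDistrib_applyList l hl hp
  calc c x * t ≤ c x * applyList ω l p x := mul_le_mul_of_nonneg_left ht (hc₀ x)
    _ ≤ ∑ w, c w * applyList ω l p w :=
      Finset.single_le_sum (fun w _ => mul_nonneg (hc₀ w) (hq w)) (Finset.mem_univ x)
    _ ≤ ∑ w, c w * p w := sum_mul_applyList_le c hc l hl

lemma exists_not_reaches_one (hω : ∀ v u, 2 ≤ ω v u) (x : V) {m : ℕ}
    (hm : m < Fintype.card V) :
    ∃ p : V → ℤ, IsDistrib p ∧ size p = m ∧ ¬Reaches G ω p x 1 := by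
  obtain ⟨S, hSx, hS⟩ := Finset.exists_subset_card_eq (s := Finset.univ.erase x) (n := m)
    (by rw [Finset.card_erase_of_mem (Finset.mem_univ x), Finset.card_univ]; omega)
  refine ⟨fun v => if v ∈ S then 1 else 0, fun v => by positivity, ?_, ?_⟩
  · simp [size, hS]
  · refine not_reaches_of_lt_weight (fun v u => ?_) ?_
    · have := hω v u
      split_ifs <;> omega
    · have : x ∉ S := fun hx => by simpa using hSx hx
      simp [this]

lemma piT_eq_of {x : V} {t n : ℕ}
    (hup : ∀ p : V → ℤ, IsDistrib p → size p = n → Reaches G ω p x t)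
    (hlow : ∀ m < n, ∃ p : V → ℤ, IsDistrib p ∧ size p = m ∧ ¬Reaches G ω p x t) :
    piT G ω x t = n := by
  refine le_antisymm (Nat.sInf_le hup) (le_csInf ⟨n, hup⟩ fun m hm => ?_)
  by_contra! hmn
  obtain ⟨p, hp, hsize, hnot⟩ := hlow m hmn
  exact hnot (hm p hp hsize)

end Moves

section CommonNeighbours

variable [DecidableEq V] {G : SimpleGraph V}

lemma reaches_of_common_neighbours {x y : V} (hxy : x ≠ y) {s : Finset V}
    (hs : ∀ v ∈ s, G.Adj y v ∧ G.Adj v x) (k : V → ℕ) {p : V → ℤ} (hp : IsDistrib p)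
    (hk : 2 * ∑ v ∈ s, (k v : ℤ) ≤ p y) {t : ℕ}
    (ht : (t : ℤ) ≤ p x + ∑ v ∈ s, (p v + k v) / 2) :
    Reaches G (fun _ _ => 2) p x t := by
  induction s using Finset.induction_on generalizing p with
  | empty => exact ⟨[], trivial, by simpa [applyList] using ht⟩
  | insert v s hvs ih =>
    obtain ⟨hyv, hvx⟩ := hs v (Finset.mem_insert_self v s)
    rw [Finset.sum_insert hvs] at hk ht
    have hkv : (k v : ℤ) * 2 ≤ p y := by
      linarith [Finset.sum_nonneg (s := s) fun w _ => Int.natCast_nonneg (k w)]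
    have hpv := hp v
    set j := ((p v + k v) / 2).toNat
    have hj : (j : ℤ) = (p v + k v) / 2 := Int.toNat_of_nonneg (by omega)
    set q₁ := (moveFn (fun _ _ => 2) (y, v))^[k v] p
    set q₂ := (moveFn (fun _ _ => 2) (v, x))^[j] q₁
    have hq₁ : IsDistrib q₁ := isDistrib_moveFn_iterate hyv.ne hp (by exact_mod_cast hkv)
    have hjq₁ : j * (2 : ℤ) ≤ q₁ v := by
      simp only [q₁, moveFn_iterate_apply hyv.ne, hyv.ne', if_false, if_true]
      omega
    have hq₂ : ∀ w ∈ s, q₂ w = p w := fun w hw => by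
      have hwv : w ≠ v := fun h => hvs (h ▸ hw)
      obtain ⟨hyw, hwx⟩ := hs w (Finset.mem_insert_of_mem hw)
      simp only [q₂, q₁, moveFn_iterate_apply hvx.ne, moveFn_iterate_apply hyv.ne]
      simp [hwv, hyw.ne', hwx.ne]
    refine Reaches.of_moveFn_iterate hyv hp (by exact_mod_cast hkv) <|
      Reaches.of_moveFn_iterate hvx hq₁ hjq₁ <|
      ih (p := q₂) (fun w hw => hs w (Finset.mem_insert_of_mem hw))
        (isDistrib_moveFn_iterate hvx.ne hq₁ hjq₁) ?_ ?_
    · have hq₂y : q₂ y = p y - k v * 2 := by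
        simp only [q₂, q₁, moveFn_iterate_apply hvx.ne, moveFn_iterate_apply hyv.ne]
        simp [hyv.ne, hxy.symm]
      linarith
    · have hq₂x : q₂ x = p x + j := by
        simp only [q₂, q₁, moveFn_iterate_apply hvx.ne, moveFn_iterate_apply hyv.ne]
        simp [hvx.ne', hxy]
      rw [Finset.sum_congr rfl fun w hw => by rw [hq₂ w hw], hq₂x]
      linarith

end CommonNeighbours

lemma exists_pair_split {X H A B Y : ℤ} {t : ℕ} (hX : 0 ≤ X) (hH : 0 ≤ H) (hA : 0 ≤ A)
    (hB : 0 ≤ B) (hY : 0 ≤ Y)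
    (hsize : X + H + A + B + Y = 5 ∧ t = 1 ∨ X + H + A + B + Y = 4 * t ∧ 2 ≤ t) :
    ∃ kh ka kb : ℕ, 2 * ((kh : ℤ) + ka + kb) ≤ Y ∧
      (t : ℤ) ≤ X + (H + kh) / 2 + (A + ka) / 2 + (B + kb) / 2 := by
  -- The `Y / 2` pairs first make `A` and `B` even where they are odd; the rest all go to `H`.
  set P := (Y / 2).toNat
  let ka := if A % 2 = 1 ∧ 1 ≤ P then 1 else 0
  let kb := if B % 2 = 1 ∧ ka + 1 ≤ P then 1 else 0
  refine ⟨P - ka - kb, ka, kb, ?_⟩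
  simp only [ka, kb]
  split_ifs <;> omega

section TwoNonadjacentVertices

variable [Fintype V] [DecidableEq V] {G : SimpleGraph V}

lemma reaches_of_size_eq {x y : V} (hxy : x ≠ y) {s : Finset V} (hs3 : s.card = 3)
    (hs : ∀ v ∈ s, G.Adj y v ∧ G.Adj v x) (huniv : Finset.univ = insert x (insert y s))
    {p : V → ℤ} (hp : IsDistrib p) {t : ℕ}
    (hsize : size p = 5 ∧ t = 1 ∨ size p = 4 * t ∧ 2 ≤ t) :
    Reaches G (fun _ _ => 2) p x t := by
  obtain ⟨h, a, b, hha, hhb, hab, rfl⟩ := Finset.card_eq_three.mp hs3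
  have hx : x ∉ ({h, a, b} : Finset V) := fun hx => (hs x hx).2.ne rfl
  have hy : y ∉ ({h, a, b} : Finset V) := fun hy => (hs y hy).1.ne rfl
  have hsum : size p = p x + p h + p a + p b + p y := by
    rw [size, huniv, Finset.sum_insert (by simp [hxy, hx]), Finset.sum_insert hy]
    simp [hha, hhb, hab]
    ring
  obtain ⟨kh, ka, kb, hk, ht⟩ :=
    exists_pair_split (hp x) (hp h) (hp a) (hp b) (hp y) (hsum ▸ hsize)
  refine reaches_of_common_neighbours hxy hs
    (fun v => if v = h then kh else if v = a then ka else kb) hp ?_ ?_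
  · simp [hha, hhb, hab, hha.symm, hhb.symm, hab.symm]
    linarith
  · simp [hha, hhb, hab, hha.symm, hhb.symm, hab.symm]
    linarith

lemma card_eq_five {x y : V} (hxy : x ≠ y) {s : Finset V} (hs3 : s.card = 3)
    (hs : ∀ v ∈ s, G.Adj y v ∧ G.Adj v x) (huniv : Finset.univ = insert x (insert y s)) :
    Fintype.card V = 5 := by
  have hx : x ∉ s := fun hx => (hs x hx).2.ne rfl
  have hy : y ∉ s := fun hy => (hs y hy).1.ne rfl
  rw [← Finset.card_univ, huniv, Finset.card_insert_of_notMem (by simp [hxy, hx]),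
    Finset.card_insert_of_notMem hy, hs3]

lemma piT_one_eq_five {x y : V} (hxy : x ≠ y) {s : Finset V} (hs3 : s.card = 3)
    (hs : ∀ v ∈ s, G.Adj y v ∧ G.Adj v x) (huniv : Finset.univ = insert x (insert y s)) :
    piT G (fun _ _ => 2) x 1 = 5 :=
  piT_eq_of (fun _ hp hsize => reaches_of_size_eq hxy hs3 hs huniv hp (Or.inl ⟨hsize, rfl⟩))
    fun _ hm => exists_not_reaches_one (fun _ _ => le_rfl) x
      (by rwa [card_eq_five hxy hs3 hs huniv])

lemma piT_eq_four_mul {x y : V} (hxy : x ≠ y) (hyx : ¬G.Adj y x) {s : Finset V}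
    (hs3 : s.card = 3) (hs : ∀ v ∈ s, G.Adj y v ∧ G.Adj v x)
    (huniv : Finset.univ = insert x (insert y s)) {t : ℕ} (ht : 2 ≤ t) :
    piT G (fun _ _ => 2) x t = 4 * t := by
  refine piT_eq_of (fun _ hp hsize => reaches_of_size_eq hxy hs3 hs huniv hp
    (Or.inr ⟨by exact_mod_cast hsize, ht⟩)) fun m hm => ?_
  have hpile : IsDistrib (Pi.single y (m : ℤ)) := fun v => by
    by_cases hv : v = y <;> simp [hv]
  refine ⟨Pi.single y (m : ℤ), hpile, by simp [size], fun hreach => ?_⟩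
  let c : V → ℤ := fun v => if v = x then 4 else if v = y then 1 else 2
  have hc : ∀ v u, G.Adj v u → c u ≤ 2 * c v := fun v u hvu => by
    have hvy : v = y → u ≠ x := by rintro rfl rfl; exact hyx hvu
    simp only [c]
    split_ifs <;> simp_all
  have hweight : ∑ w, c w * Pi.single (M := fun _ => ℤ) y m w = m := by
    simp [Pi.single_apply, c, hxy.symm]
  have := mul_le_sum_mul_of_reaches (fun v => by simp only [c]; split_ifs <;> norm_num) hc
    hpile hreach
  simp only [hweight, c, if_true] at this
  omega

end TwoNonadjacentVertices

/-- For a rim vertex `x` (a vertex of degree 3) of the wheel `W_5`,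
with all edge weights `2`: `π_1(W_5, x) = 5` and `π_t(W_5, x) = 4t` for all `t ≥ 2`. -/
theorem statement4 (x : Fin 5) (hx : W5.degree x = 3) :
    piT W5 (fun _ _ => 2) x 1 = 5 ∧
      ∀ t : ℕ, 2 ≤ t → piT W5 (fun _ _ => 2) x t = 4 * t := by
  obtain ⟨y, s, hxy, hyx, hs3, hs, huniv⟩ : ∃ (y : Fin 5) (s : Finset (Fin 5)), x ≠ y ∧
      ¬W5.Adj y x ∧ s.card = 3 ∧ (∀ v ∈ s, W5.Adj y v ∧ W5.Adj v x) ∧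
      Finset.univ = insert x (insert y s) := by
    fin_cases x
    · exact absurd hx (by decide)
    · exact ⟨3, {0, 2, 4}, by decide⟩
    · exact ⟨4, {0, 1, 3}, by decide⟩
    · exact ⟨1, {0, 2, 4}, by decide⟩
    · exact ⟨2, {0, 1, 3}, by decide⟩
  exact ⟨piT_one_eq_five hxy hs3 hs huniv,
    fun t ht => piT_eq_four_mul hxy hyx hs3 hs huniv ht⟩
end

section
/- Let G_ω be a weighted graph and x ∈ V(G). For i ≥ 0, let B_i(G_ω, x) be the set of barely sufficient distributions for x from which x is reachable by an executable sequence of i pebbling moves but by no executable sequence of fewer than i moves. If p ∈ B_{i+1}(G_ω, x), then there exist q ∈ B_i(G_ω, x) and a pebbling move r = (v→u) such that p = q_{r^{-1}}. -/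
open Finset

variable {V : Type*}

/-- A pebble distribution is sufficient for `x` if `x` is reachable from it. -/
def Sufficient [DecidableEq V] (G : SimpleGraph V) (ω : V → V → ℕ) (p : V → ℤ)
    (x : V) : Prop :=
  Reaches G ω p x 1

/-- A pebble distribution `p` is barely sufficient for `x`: it is sufficient, but `x` is
not reachable from any pebble distribution `q` with `q < p`. -/
def BarelySufficient [DecidableEq V] (G : SimpleGraph V) (ω : V → V → ℕ) (p : V → ℤ)
    (x : V) : Prop :=
  IsDistrib p ∧ Sufficient G ω p x ∧
    ∀ q : V → ℤ, IsDistrib q → (∀ v, q v ≤ p v) → q ≠ p → ¬Sufficient G ω q x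

/-- The inverse `(v→u)⁻¹` of the pebbling move `m = (v, u)`: add `ω v u` pebbles at `v`
and remove one pebble at `u`. -/
def invMoveFn [DecidableEq V] (ω : V → V → ℕ) (m : V × V) (p : V → ℤ) : V → ℤ :=
  fun w => if w = m.1 then p m.1 + ω m.1 m.2 else if w = m.2 then p m.2 - 1 else p w

/-- `x` is reachable from `p` by an executable sequence of exactly `i` pebbling moves. -/
def ReachesIn [DecidableEq V] (G : SimpleGraph V) (ω : V → V → ℕ) (p : V → ℤ) (x : V)
    (i : ℕ) : Prop :=
  ∃ l : List (V × V), l.length = i ∧ Executable G ω p l ∧ (1 : ℤ) ≤ applyList ω l p x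

/-- `p ∈ B_i(G_ω, x)`: `p` is barely sufficient for `x`, and `x` is reachable from `p`
in `i` pebbling moves but not in fewer than `i` moves. -/
def BLevel [DecidableEq V] (G : SimpleGraph V) (ω : V → V → ℕ) (x : V) (i : ℕ)
    (p : V → ℤ) : Prop :=
  BarelySufficient G ω p x ∧ ReachesIn G ω p x i ∧ ∀ j, j < i → ¬ReachesIn G ω p x j

lemma moveFn_mono [DecidableEq V] (ω : V → V → ℕ) (m : V × V) {p p' : V → ℤ}
    (h : ∀ w, p w ≤ p' w) : ∀ w, moveFn ω m p w ≤ moveFn ω m p' w := by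
  intro w
  unfold moveFn
  split_ifs <;> [linarith [h m.1]; linarith [h m.2]; exact h w]

lemma exec_mono [DecidableEq V] (G : SimpleGraph V) (ω : V → V → ℕ) :
    ∀ (l : List (V × V)) (p p' : V → ℤ), (∀ w, p w ≤ p' w) →
      Executable G ω p l →
      Executable G ω p' l ∧ ∀ w, applyList ω l p w ≤ applyList ω l p' w := by
  intro l
  induction l with
  | nil => intro p p' h _; exact ⟨trivial, h⟩
  | cons m l ih =>
    intro p p' h hex
    obtain ⟨hadj, hpos, hrest⟩ := hex
    have hmono := moveFn_mono ω m h
    obtain ⟨h1, h2⟩ := ih (moveFn ω m p) (moveFn ω m p') hmono hrest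
    exact ⟨⟨hadj, fun w => le_trans (hpos w) (hmono w), h1⟩, h2⟩

/-- If `p ∈ B_{i+1}(G_ω, x)` then `p = q_{r⁻¹}` for some
`q ∈ B_i(G_ω, x)` and some pebbling move `r = (v→u)`. -/
theorem statement13 {V : Type*} [Fintype V] [DecidableEq V]
    (G : SimpleGraph V) (hG : G.Connected)
    (ω : V → V → ℕ) (hsym : ∀ u v : V, ω u v = ω v u)
    (hω : ∀ u v : V, G.Adj u v → 2 ≤ ω u v)
    (x : V) (i : ℕ) (p : V → ℤ) (hp : BLevel G ω x (i + 1) p) :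
    ∃ q : V → ℤ, BLevel G ω x i q ∧
      ∃ r : V × V, G.Adj r.1 r.2 ∧ p = invMoveFn ω r q := by
  obtain ⟨⟨hpdist, hpsuf, hpbar⟩, ⟨l, hlen, hex, hval⟩, hmin⟩ := hp
  match l, hlen with
  | r :: s, hlen =>
  obtain ⟨v, u⟩ := r
  obtain ⟨hadj, hpos, hexs⟩ := hex
  have hslen : s.length = i := by simpa using hlen
  have hne : v ≠ u := hadj.ne
  have hW : (2 : ℤ) ≤ (ω v u : ℤ) := by exact_mod_cast hω v u hadj
  set q : V → ℤ := moveFn ω (v, u) p with hq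
  have hqv : q v = p v - ω v u := by simp [hq, moveFn]
  have hqu : q u = p u + 1 := by simp [hq, moveFn, hne.symm]
  have hqw : ∀ w, w ≠ v → w ≠ u → q w = p w := by
    intro w h1 h2; simp [hq, moveFn, h1, h2]
  have hvals : applyList ω ((v, u) :: s) p = applyList ω s q := rfl
  refine ⟨q, ⟨⟨hpos, ⟨s, hexs, by rwa [hvals] at hval⟩, ?_⟩,
    ⟨s, hslen, hexs, by rwa [hvals] at hval⟩, ?_⟩, (v, u), hadj, ?_⟩
  · -- barely sufficient minimality for q
    intro q' hq'dist hq'le hq'ne hq'suf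
    obtain ⟨s'', hexs'', hvals''⟩ := hq'suf
    -- candidate p''
    set p'' : V → ℤ := fun w => if w = v then q' v + ω v u
      else if w = u then max (q' u - 1) 0 else q' w with hp''
    have hp''v : p'' v = q' v + ω v u := by simp [hp'']
    have hp''u : p'' u = max (q' u - 1) 0 := by simp [hp'', hne.symm]
    have hp''w : ∀ w, w ≠ v → w ≠ u → p'' w = q' w := by
      intro w h1 h2; simp [hp'', h1, h2]
    have hp''dist : IsDistrib p'' := by
      intro w
      by_cases h1 : w = v
      · rw [h1]; rw [hp''v]; have := hq'dist v; linarith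
      by_cases h2 : w = u
      · rw [h2]; rw [hp''u]; exact le_max_right _ _
      · rw [hp''w w h1 h2]; exact hq'dist w
    have hp''le : ∀ w, p'' w ≤ p w := by
      intro w
      by_cases h1 : w = v
      · rw [h1]; rw [hp''v]; have := hq'le v; rw [hqv] at this; linarith
      by_cases h2 : w = u
      · rw [h2]; rw [hp''u]
        have h3 := hq'le u; rw [hqu] at h3
        have h4 := hpdist u
        exact max_le (by linarith) h4
      · rw [hp''w w h1 h2]
        have := hq'le w; rwa [hqw w h1 h2] at this
    have hmv : ∀ w, q' w ≤ moveFn ω (v, u) p'' w := by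
      intro w
      by_cases h1 : w = v
      · rw [h1]
        have : moveFn ω (v, u) p'' v = p'' v - ω v u := by simp [moveFn]
        rw [this, hp''v]; omega
      by_cases h2 : w = u
      · rw [h2]
        have : moveFn ω (v, u) p'' u = p'' u + 1 := by
          simp [moveFn, hne.symm]
        rw [this, hp''u]
        have := le_max_left (q' u - 1) 0; linarith
      · have : moveFn ω (v, u) p'' w = p'' w := by
          simp [moveFn, h1, h2]
        rw [this, hp''w w h1 h2]
    have hmvpos : ∀ w, 0 ≤ moveFn ω (v, u) p'' w :=
      fun w => le_trans (hq'dist w) (hmv w)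
    obtain ⟨hexs2, hvals2⟩ := exec_mono G ω s'' q' (moveFn ω (v, u) p'') hmv hexs''
    have hp''suf : Sufficient G ω p'' x :=
      ⟨(v, u) :: s'', ⟨hadj, hmvpos, hexs2⟩, le_trans hvals'' (hvals2 x)⟩
    by_cases hpp : p'' = p
    · -- degenerate case: show q' itself is < p and sufficient
      have hq'v : q' v = q v := by
        have := congrFun hpp v; rw [hp''v] at this; rw [hqv]; linarith
      have hq'ww : ∀ w, w ≠ v → w ≠ u → q' w = q w := by
        intro w h1 h2
        have := congrFun hpp w; rw [hp''w w h1 h2, ← hqw w h1 h2] at this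
        exact this
      have hq'u : q' u ≠ q u := by
        intro h
        apply hq'ne; funext w
        by_cases h1 : w = v
        · rw [h1]; exact hq'v
        by_cases h2 : w = u
        · rw [h2]; exact h
        · exact hq'ww w h1 h2
      have hmaxeq : max (q' u - 1) 0 = p u := by
        have := congrFun hpp u; rw [hp''u] at this; exact this
      have hq'ult : q' u < q u := lt_of_le_of_ne (hq'le u) hq'u
      have hq'u0 : q' u = 0 := by
        rcases le_or_gt 1 (q' u) with h | h
        · exfalso
          have : max (q' u - 1) 0 = q' u - 1 := max_eq_left (by linarith)
          rw [this] at hmaxeq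
          rw [hqu] at hq'ult; omega
        · have := hq'dist u; omega
      have hpueq : p u = 0 := by
        rw [hq'u0] at hmaxeq; simpa using hmaxeq.symm
      -- q' ≤ p, q' ≠ p, q' sufficient: contradiction
      refine hpbar q' hq'dist ?_ ?_ ⟨s'', hexs'', hvals''⟩
      · intro w
        by_cases h1 : w = v
        · rw [h1]; rw [hq'v, hqv]; linarith
        by_cases h2 : w = u
        · rw [h2]; rw [hq'u0, hpueq]
        · rw [hq'ww w h1 h2, hqw w h1 h2]
      · intro h
        have := congrFun h v
        rw [hq'v, hqv] at this; linarith
    · exact hpbar p'' hp''dist hp''le hpp hp''suf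
  · -- minimality: no shorter sequence from q
    intro j hj ⟨s', hlen', hexs', hvals'⟩
    exact hmin (j + 1) (by omega)
      ⟨(v, u) :: s', by simp [hlen'], ⟨hadj, hpos, hexs'⟩, hvals'⟩
  · -- p = invMoveFn r q
    funext w
    by_cases h1 : w = v
    · rw [h1]
      have : invMoveFn ω (v, u) q v = q v + ω v u := by simp [invMoveFn]
      rw [this, hqv]; ring
    by_cases h2 : w = u
    · rw [h2]
      have : invMoveFn ω (v, u) q u = q u - 1 := by
        simp [invMoveFn, hne.symm]
      rw [this, hqu]; ring
    · have : invMoveFn ω (v, u) q w = q w := by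
        simp [invMoveFn, h1, h2]
      rw [this, hqw w h1 h2]
end

section
/- Let G_ω be a weighted graph with goal vertex x, and let p be a pebble distribution that is squished on the thread of every unweighted open ear of G with respect to x. Then p is insufficient for x if and only if there is no barely sufficient distribution q for x that is squished on the thread of every unweighted open ear and satisfies q(v) ≤ p(v) for all v ∈ V(G). -/
open Finset

variable {V : Type*}

/-- `v` is a cut vertex of the (connected) graph `G`: deleting `v` disconnects `G`. -/
def IsCutVertex {V : Type*} (G : SimpleGraph V) (v : V) : Prop :=
  ¬(G.induce {w : V | w ≠ v}).Connected

/-- An ear of `G` with respect to the goal vertex `x`: a maximal thread of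
inner vertices `w 1, …, w k` of degree `2`, none equal to `x`, together with the two end
vertices `w 0` and `w (k+1)` (which coincide for a closed ear). -/
structure EarData {V : Type*} (G : SimpleGraph V) (x : V) where
  /-- the number of inner vertices -/
  k : ℕ
  kpos : 1 ≤ k
  /-- the consecutive vertices of the ear -/
  w : Fin (k + 2) → V
  adj : ∀ i : Fin (k + 1), G.Adj (w i.castSucc) (w i.succ)
  /-- inner vertices differ from the goal vertex -/
  notx : ∀ i : Fin (k + 2), i ≠ 0 → i ≠ Fin.last (k + 1) → w i ≠ x
  /-- inner vertices have degree 2: their neighbors are exactly their ear neighbors -/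
  deg2 : ∀ i : Fin (k + 2), i ≠ 0 → i ≠ Fin.last (k + 1) →
    G.neighborSet (w i) = {w (i - 1), w (i + 1)}
  /-- inner vertices are distinct from each other and from the ends -/
  inj : ∀ i j : Fin (k + 2), i ≠ 0 → i ≠ Fin.last (k + 1) → w i = w j → i = j
  /-- maximality of the thread at the first end -/
  max0 : w 0 = x ∨ ¬∃ a b : V, a ≠ b ∧ G.neighborSet (w 0) = {a, b}
  /-- maximality of the thread at the second end -/
  maxl : w (Fin.last (k + 1)) = x ∨
    ¬∃ a b : V, a ≠ b ∧ G.neighborSet (w (Fin.last (k + 1))) = {a, b}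

variable {G : SimpleGraph V} {x : V}

/-- A closed ear: the two end vertices coincide. -/
def EarData.IsClosed (E : EarData G x) : Prop :=
  E.w 0 = E.w (Fin.last (E.k + 1))

/-- A cut ear: all inner vertices are cut vertices of `G`. -/
def EarData.IsCutEar (E : EarData G x) : Prop :=
  ∀ i : Fin (E.k + 2), i ≠ 0 → i ≠ Fin.last (E.k + 1) → IsCutVertex G (E.w i)

/-- An open ear: an ear that is neither closed nor a cut ear. -/
def EarData.IsOpen (E : EarData G x) : Prop :=
  ¬E.IsClosed ∧ ¬E.IsCutEar

/-- An unweighted ear: all of its edges have weight `2`. -/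
def EarData.Unweighted (E : EarData G x) (ω : V → V → ℕ) : Prop :=
  ∀ i : Fin (E.k + 1), ω (E.w i.castSucc) (E.w i.succ) = 2

/-- `p` is squished on the thread of the ear `E`: all pebbles on the thread lie on a
single vertex or on two adjacent vertices of the thread. -/
def EarData.SquishedOn (E : EarData G x) (p : V → ℤ) : Prop :=
  ∃ j : Fin (E.k + 2), ∀ i : Fin (E.k + 2), i ≠ 0 → i ≠ Fin.last (E.k + 1) →
    0 < p (E.w i) → i = j ∨ (i : ℕ) = (j : ℕ) + 1

/-!
Being squished on a thread only restricts which thread vertices carry pebbles, so it passes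
from `p` to every `q ≤ p`, and sufficiency is monotone in the distribution. Hence `p` is
sufficient iff some `q ≤ p` is barely sufficient; such a `q` is found by removing pebbles
from `p` for as long as it stays sufficient, which terminates since the size drops.
-/

section Pebbling

variable [DecidableEq V] (ω : V → V → ℕ)

lemma moveFn_sub_moveFn (m : V × V) (p q : V → ℤ) (w : V) :
    moveFn ω m p w - moveFn ω m q w = p w - q w := by
  simp only [moveFn]
  split_ifs <;> subst_vars <;> ring

lemma applyList_sub_applyList (l : List (V × V)) (p q : V → ℤ) (w : V) :
    applyList ω l p w - applyList ω l q w = p w - q w := by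
  induction l generalizing p q with
  | nil => rfl
  | cons m l ih => rw [applyList, applyList, ih, moveFn_sub_moveFn]

lemma applyList_mono {l : List (V × V)} {p q : V → ℤ} (hqp : ∀ v, q v ≤ p v) (w : V) :
    applyList ω l q w ≤ applyList ω l p w := by
  linarith [applyList_sub_applyList ω l p q w, hqp w]

lemma Executable.mono {l : List (V × V)} {p q : V → ℤ} (hqp : ∀ v, q v ≤ p v)
    (h : Executable G ω q l) : Executable G ω p l := by
  induction l generalizing p q with
  | nil => trivial
  | cons m l ih =>
    obtain ⟨hadj, hnonneg, hrest⟩ := h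
    have hmove : ∀ v, moveFn ω m q v ≤ moveFn ω m p v :=
      applyList_mono ω (l := [m]) hqp
    exact ⟨hadj, fun w => (hnonneg w).trans (hmove w), ih hmove hrest⟩

lemma Reaches.mono {p q : V → ℤ} {t : ℕ} (hqp : ∀ v, q v ≤ p v) (h : Reaches G ω q x t) :
    Reaches G ω p x t := by
  obtain ⟨l, hexec, hx⟩ := h
  exact ⟨l, hexec.mono ω hqp, hx.trans (applyList_mono ω hqp x)⟩

lemma Sufficient.mono {p q : V → ℤ} (hqp : ∀ v, q v ≤ p v) (h : Sufficient G ω q x) :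
    Sufficient G ω p x :=
  Reaches.mono ω hqp h

end Pebbling

lemma size_lt_size_of_le_of_ne [Fintype V] {p q : V → ℤ} (hqp : ∀ v, q v ≤ p v)
    (hne : q ≠ p) : size q < size p := by
  obtain ⟨v, hv⟩ := Function.ne_iff.mp hne
  exact Finset.sum_lt_sum (fun v _ => hqp v) ⟨v, Finset.mem_univ v, (hqp v).lt_of_ne hv⟩

lemma exists_barelySufficient_le [Fintype V] [DecidableEq V] {ω : V → V → ℕ} {p : V → ℤ}
    (hp : IsDistrib p) (hsuf : Sufficient G ω p x) :
    ∃ q, BarelySufficient G ω q x ∧ ∀ v, q v ≤ p v := by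
  induction hn : (size p).toNat using Nat.strong_induction_on generalizing p with
  | _ n ih =>
  by_cases hbare : BarelySufficient G ω p x
  · exact ⟨p, hbare, fun _ => le_rfl⟩
  obtain ⟨q, hq, hqp, hne, hqsuf⟩ : ∃ q, IsDistrib q ∧ (∀ v, q v ≤ p v) ∧ q ≠ p ∧
      Sufficient G ω q x := by
    simpa [BarelySufficient, hp, hsuf] using hbare
  have hsize : (size q).toNat < n := by
    have : 0 ≤ size q := Finset.sum_nonneg fun v _ => hq v
    have := size_lt_size_of_le_of_ne hqp hne
    omega
  obtain ⟨r, hr, hrq⟩ := ih _ hsize hq hqsuf rfl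
  exact ⟨r, hr, fun v => (hrq v).trans (hqp v)⟩

lemma EarData.SquishedOn.mono {E : EarData G x} {p q : V → ℤ} (hqp : ∀ v, q v ≤ p v)
    (h : E.SquishedOn p) : E.SquishedOn q := by
  obtain ⟨j, hj⟩ := h
  exact ⟨j, fun i hi0 hil hpos => hj i hi0 hil (hpos.trans_le (hqp _))⟩

theorem statement16_general {V : Type*} [Fintype V] [DecidableEq V]
    (G : SimpleGraph V)
    (ω : V → V → ℕ)
    (x : V) (p : V → ℤ) (hp : IsDistrib p)
    (hsq : ∀ E : EarData G x, E.IsOpen → E.Unweighted ω → E.SquishedOn p) :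
    ¬Sufficient G ω p x ↔
      ¬∃ q : V → ℤ, BarelySufficient G ω q x ∧
        (∀ E : EarData G x, E.IsOpen → E.Unweighted ω → E.SquishedOn q) ∧
        ∀ v, q v ≤ p v := by
  rw [not_iff_not]
  constructor
  · intro hsuf
    obtain ⟨q, hq, hqp⟩ := exists_barelySufficient_le hp hsuf
    exact ⟨q, hq, fun E hopen hunw => (hsq E hopen hunw).mono hqp, hqp⟩
  · rintro ⟨q, ⟨-, hqsuf, -⟩, -, hqp⟩
    exact hqsuf.mono ω hqp

/-- Let `p` be a pebble distribution that is squished on the thread of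
every unweighted open ear of `G` with respect to `x`. Then `p` is insufficient for `x`
if and only if there is no barely sufficient distribution `q` for `x` that is squished on
the thread of every unweighted open ear and satisfies `q ≤ p` pointwise. -/
theorem statement16 {V : Type*} [Fintype V] [DecidableEq V]
    (G : SimpleGraph V) (hG : G.Connected)
    (ω : V → V → ℕ) (hsym : ∀ u v : V, ω u v = ω v u)
    (hω : ∀ u v : V, G.Adj u v → 2 ≤ ω u v)
    (x : V) (p : V → ℤ) (hp : IsDistrib p)
    (hsq : ∀ E : EarData G x, E.IsOpen → E.Unweighted ω → E.SquishedOn p) :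
    ¬Sufficient G ω p x ↔
      ¬∃ q : V → ℤ, BarelySufficient G ω q x ∧
        (∀ E : EarData G x, E.IsOpen → E.Unweighted ω → E.SquishedOn q) ∧
        ∀ v, q v ≤ p v :=
  statement16_general G ω x p hp hsq
end
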